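/- arXiv:hep-th/9405093 — 6 statements merged into one kernel-verified Lean document; each statement's English description precedes it below -/
import Mathlib

section
/- Let Ψ be the pairing defined on pairs (r, f) with r ∈ ℤ and f ∈ ℂ[X] by: Ψ((a,p),(b,q)) = ∑_{j=1}^{a} p(−j)·q(a−j) if a = −b and a > 0; Ψ((a,p),(b,q)) = −∑_{j=1}^{−a} q(−j)·p(−a−j) if a = −b and a < 0; and Ψ((a,p),(b,q)) = 0 otherwise. Let the bracket be β((r,f),(s,g)) = (r+s, f(X+s)·g(X) − f(X)·g(X+r)). Then for all r, s, t ∈ ℤ and all f, g, h ∈ ℂ[X], the cyclic sum Ψ(β((r,f),(s,g)), (t,h)) + Ψ(β((s,g),(t,h)), (r,f)) + Ψ(β((t,h),(r,f)), (s,g)) = 0. That is, Ψ is a two-cocycle on the Lie algebra of differential operators on the circle, so the W_{1+∞} bracket with central term C·Ψ satisfies the Jacobi identity. -/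
/-!
On pairs of opposite degrees, `Ψ((a,p),(-a,q))` is the oriented sum `∑_{0 < j ≤ a} p(-j) q(a-j)`,
a discrete integral from `0` to `a`. When `r + s + t = 0`, shifting the summation variable turns
each term of the cyclic sum into a difference of oriented sums of the two fixed functions
`j ↦ f(-j) g(-s-j) h(r-j)` and `j ↦ f(-j) g(r-j) h(r+s-j)`, over intervals whose endpoints run
around the cycles `-s → r → 0 → -s` and `0 → r+s → r → 0`; by Chasles' relation both contributions
vanish. When `r + s + t ≠ 0`, every term vanishes for degree reasons.
-/

open Polynomial

/-- The non-central part of the `W_{1+∞}` bracket: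
`β((r,f),(s,g)) = (r+s, f(X+s)·g(X) − f(X)·g(X+r))`. -/
noncomputable def Wbracket (x y : ℤ × Polynomial ℂ) : ℤ × Polynomial ℂ :=
  (x.1 + y.1,
    x.2.comp (X + C (y.1 : ℂ)) * y.2 - x.2 * y.2.comp (X + C (x.1 : ℂ)))

/-- The two-cocycle `Ψ` of the `W_{1+∞}` algebra:
`Ψ((a,p),(b,q)) = ∑_{j=1}^{a} p(−j)·q(a−j)` if `a = −b` and `a > 0`,
`Ψ((a,p),(b,q)) = −∑_{j=1}^{−a} q(−j)·p(−a−j)` if `a = −b` and `a < 0`,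
and `0` otherwise. -/
noncomputable def Psi (x y : ℤ × Polynomial ℂ) : ℂ :=
  if x.1 = -y.1 ∧ 0 < x.1 then
    ∑ j ∈ Finset.Icc 1 x.1.toNat, x.2.eval (-(j : ℂ)) * y.2.eval ((x.1 : ℂ) - (j : ℂ))
  else if x.1 = -y.1 ∧ x.1 < 0 then
    -∑ j ∈ Finset.Icc 1 (-x.1).toNat,
        y.2.eval (-(j : ℂ)) * x.2.eval (((-x.1 : ℤ) : ℂ) - (j : ℂ))
  else 0

open Finset

section IntervalSum

variable {M : Type*} [AddCommGroup M]

/-- The discrete analogue of `∫_a^b F`: `∑_{a < j ≤ b} F j`, or `-∑_{b < j ≤ a} F j` when `b < a`. -/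
noncomputable def intervalSum (F : ℤ → M) (a b : ℤ) : M :=
  ∑ j ∈ Ioc a b, F j - ∑ j ∈ Ioc b a, F j

lemma intervalSum_eq_sum_Ioc_sub_sum_Ioc (F : ℤ → M) {m a b : ℤ} (hma : m ≤ a) (hmb : m ≤ b) :
    intervalSum F a b = ∑ j ∈ Ioc m b, F j - ∑ j ∈ Ioc m a, F j := by
  rcases le_total a b with hab | hba
  · rw [intervalSum, Ioc_eq_empty_of_le hab, sum_empty, ← Ioc_union_Ioc_eq_Ioc hma hab,
      sum_union (Ioc_disjoint_Ioc_of_le le_rfl)]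
    abel
  · rw [intervalSum, Ioc_eq_empty_of_le hba, sum_empty, ← Ioc_union_Ioc_eq_Ioc hmb hba,
      sum_union (Ioc_disjoint_Ioc_of_le le_rfl)]
    abel

lemma intervalSum_add_intervalSum (F : ℤ → M) (a b c : ℤ) :
    intervalSum F a b + intervalSum F b c = intervalSum F a c := by
  have ha : min (min a b) c ≤ a := by omega
  have hb : min (min a b) c ≤ b := by omega
  have hc : min (min a b) c ≤ c := by omega
  rw [intervalSum_eq_sum_Ioc_sub_sum_Ioc F ha hb, intervalSum_eq_sum_Ioc_sub_sum_Ioc F hb hc,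
    intervalSum_eq_sum_Ioc_sub_sum_Ioc F ha hc, sub_add_sub_cancel']

lemma intervalSum_cycle (F : ℤ → M) (a b c : ℤ) :
    intervalSum F a b + intervalSum F b c + intervalSum F c a = 0 := by
  rw [intervalSum_add_intervalSum, intervalSum_add_intervalSum]
  simp [intervalSum]

lemma intervalSum_comp_add_right (F : ℤ → M) (k a b : ℤ) :
    intervalSum (fun j => F (j + k)) a b = intervalSum F (a + k) (b + k) := by
  simp only [intervalSum, ← map_add_right_Ioc, sum_map, addRightEmbedding_apply]

lemma intervalSum_sub (F G : ℤ → M) (a b : ℤ) :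
    intervalSum (fun j => F j - G j) a b = intervalSum F a b - intervalSum G a b := by
  simp only [intervalSum, sum_sub_distrib]; abel

lemma intervalSum_swap (F : ℤ → M) (a b : ℤ) : intervalSum F b a = -intervalSum F a b :=
  (neg_sub _ _).symm

lemma intervalSum_zero_eq_sum_Icc (F : ℤ → M) {n : ℤ} (hn : 0 ≤ n) :
    intervalSum F 0 n = ∑ k ∈ Icc 1 n.toNat, F k := by
  rw [intervalSum, Ioc_eq_empty_of_le hn, sum_empty, sub_zero]
  refine (sum_nbij' ((↑) : ℕ → ℤ) Int.toNat ?_ ?_ (by simp) ?_ (fun _ _ => rfl)).symm <;>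
    intro k hk <;> simp only [mem_Icc, mem_Ioc] at hk ⊢ <;> omega

end IntervalSum

lemma Psi_eq_intervalSum (a b : ℤ) (p q : ℂ[X]) :
    Psi (a, p) (b, q) =
      if a = -b then intervalSum (fun j : ℤ => p.eval (-(j : ℂ)) * q.eval ((a : ℂ) - j)) 0 a
      else 0 := by
  rw [Psi]
  dsimp only
  by_cases hab : a = -b
  · rcases lt_trichotomy a 0 with ha | rfl | ha
    · have hshift := intervalSum_comp_add_right
        (fun j : ℤ => p.eval (-(j : ℂ)) * q.eval ((a : ℂ) - j)) a 0 (-a)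
      rw [zero_add, neg_add_cancel] at hshift
      rw [if_neg (by omega), if_pos ⟨hab, ha⟩, if_pos hab, intervalSum_swap, ← hshift,
        intervalSum_zero_eq_sum_Icc _ (by omega)]
      refine congrArg Neg.neg (sum_congr rfl fun k _ => ?_)
      push_cast
      rw [mul_comm]
      ring_nf
    · simp [intervalSum]
    · rw [if_pos ⟨hab, ha⟩, if_pos hab, intervalSum_zero_eq_sum_Icc _ ha.le]
      simp
  · simp [hab]

noncomputable def tripleEval (f g h : ℂ[X]) (a b : ℤ) (j : ℤ) : ℂ :=
  f.eval (-(j : ℂ)) * g.eval ((a : ℂ) - j) * h.eval ((b : ℂ) - j)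

lemma intervalSum_tripleEval_rotate (f g h : ℂ[X]) (a b x y : ℤ) :
    intervalSum (tripleEval g h f a b) x y =
      intervalSum (tripleEval f g h (-b) (a - b)) (x - b) (y - b) := by
  rw [sub_eq_add_neg x, sub_eq_add_neg y, ← intervalSum_comp_add_right]
  congr 1
  funext j
  simp only [tripleEval]
  push_cast
  ring_nf

lemma Psi_Wbracket_of_add_eq_zero {r s t : ℤ} (hrst : r + s + t = 0) (f g h : ℂ[X]) :
    Psi (Wbracket (r, f) (s, g)) (t, h) =
      intervalSum (tripleEval f g h (-s) r) (-s) r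
        - intervalSum (tripleEval f g h r (r + s)) 0 (r + s) := by
  have hshift : intervalSum (tripleEval f g h (-s) r) (-s) r =
      intervalSum (fun j => tripleEval f g h (-s) r (j + -s)) 0 (r + s) := by
    rw [intervalSum_comp_add_right, zero_add, add_neg_cancel_right]
  rw [Wbracket, Psi_eq_intervalSum, if_pos (by omega), hshift, ← intervalSum_sub]
  congr 1
  funext j
  simp only [tripleEval, eval_sub, eval_mul, eval_comp, eval_add, eval_X, eval_C]
  push_cast
  ring_nf

/-- `Ψ` is a two-cocycle: its cyclic sum against the `W_{1+∞}` bracket vanishes,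
so the bracket with central term `C·Ψ` satisfies the Jacobi identity. -/
theorem Psi_is_two_cocycle (r s t : ℤ) (f g h : Polynomial ℂ) :
    Psi (Wbracket (r, f) (s, g)) (t, h) + Psi (Wbracket (s, g) (t, h)) (r, f)
      + Psi (Wbracket (t, h) (r, f)) (s, g) = 0 := by
  by_cases hrst : r + s + t = 0
  · rw [Psi_Wbracket_of_add_eq_zero hrst, Psi_Wbracket_of_add_eq_zero (by omega : s + t + r = 0),
      Psi_Wbracket_of_add_eq_zero (by omega : t + r + s = 0)]
    simp only [intervalSum_tripleEval_rotate g h f, intervalSum_tripleEval_rotate f g h]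
    obtain rfl : t = -r - s := by omega
    ring_nf -- brings the endpoints into the form of the two cycles
    linear_combination intervalSum_cycle (tripleEval f g h (-s) r) (-s) r 0
      - intervalSum_cycle (tripleEval f g h r (s + r)) 0 (s + r) r
  · simp only [Wbracket, Psi_eq_intervalSum]
    rw [if_neg (by omega), if_neg (by omega), if_neg (by omega)]
    simp
end

section
/- Let K ≥ 1 and s ≥ 0 be integers and let q be a real number with 0 < q < 1. For a finitely supported function n from the positive integers to ℕ, set α_s(n) = ∑_{t=s+1}^{∞} (t − s) · binomial(n_t + tK − 1, tK) · ∏_{u ≥ 1, u ≠ t} binomial(n_u + uK − 1, n_u) (the sum and product are finite since binomial(tK−1, tK) = 0 when n_t = 0 and binomial(uK−1, 0) = 1 when n_u = 0). Then ∑_{n} α_s(n) · q^{∑_{j≥1} j·n_j}, summed over all finitely supported n : ℤ_{>0} → ℕ, converges and equals (∑_{t=s+1}^{∞} (t − s) q^t / (1 − q^t)) · ∏_{u=1}^{∞} (1 − q^u)^{−Ku}, where the infinite product converges. -/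
open Finset
open scoped ENNReal

/-- The multiplicity `α_s(n)` of null vectors for the monomial basis labeled by the
finitely supported function `n` (with `n t` generators of level `t`):
`α_s(n) = ∑_{t ≥ s+1} (t−s)·C(n_t + tK − 1, tK)·∏_{u ≥ 1, u ≠ t} C(n_u + uK − 1, n_u)`.
The sum and product are finite: the `t`-th summand vanishes when `n t = 0`
(since `C(tK−1, tK) = 0`) and the `u`-th factor is `1` when `n u = 0`. -/
noncomputable def alphaW (K s : ℕ) (n : ℕ →₀ ℕ) : ℕ :=
  ∑ᶠ t ∈ {t : ℕ | s + 1 ≤ t},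
    (t - s) * Nat.choose (n t + t * K - 1) (t * K) *
      ∏ᶠ u ∈ {u : ℕ | 1 ≤ u ∧ u ≠ t}, Nat.choose (n u + u * K - 1) (n u)

/-!
Write `a_u(m) = C(m + uK - 1, m) q^{um}` (`levelWeight`) for the weight of `m` generators of
level `u` and `c_t(m) = C(m + tK - 1, tK) q^{tm}` (`markedWeight`) for the marked level `t`, so that
`α_s(n) q^{∑ j n_j} = ∑_t (t - s) c_t(n_t) ∏_{u ≠ t} a_u(n_u)`. All terms are nonnegative, so the
sum over `n` may be computed in `ℝ≥0∞`, where it factorises level by level (an Euler product over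
finitely supported functions). The negative binomial series give `∑_m a_u(m) = (1 - q^u)^{-uK}`
and `∑_m c_t(m) = q^t (1 - q^t)^{-tK-1}`, so the `t`-th summand contributes
`(t - s) q^t (1 - q^t)^{-tK-1} · ∏_{u ≠ t} (1 - q^u)^{-uK} = (t - s) q^t / (1 - q^t) · P`
with `P = ∏_u (1 - q^u)^{-uK}`.
-/

section EulerProduct

variable {ι : Type*}

noncomputable def supportedEraseEquiv {U : Set ι} {t : ι} (ht : t ∈ U) :
    {n : ι →₀ ℕ // ↑n.support ⊆ U} ≃ ℕ × {n : ι →₀ ℕ // ↑n.support ⊆ U \ {t}} where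
  toFun n := (n.1 t, ⟨n.1.erase t, by
    classical
    rw [Finsupp.support_erase, coe_erase]
    exact Set.sdiff_subset_sdiff_left n.2⟩)
  invFun p := ⟨p.2.1.update t p.1, by
    classical
    refine (coe_subset.2 (Finsupp.support_update_subset _ _)).trans ?_
    simpa [Set.insert_subset_iff, ht] using p.2.2.trans Set.sdiff_subset⟩
  left_inv n := by simp
  right_inv p := by
    classical
    have hp : p.2.1 t = 0 := Finsupp.support_subset_iff.1 p.2.2 t (by simp)
    ext <;> simp [Finsupp.update_apply, Finsupp.erase_of_notMem_support, hp]

variable (f : ι → ℕ → ℝ≥0∞)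

noncomputable def supportedProdSum (U : Set ι) : ℝ≥0∞ :=
  ∑' n : {n : ι →₀ ℕ // ↑n.support ⊆ U}, n.1.prod f

theorem tsum_mul_prod_erase {U : Set ι} {t : ι} (ht : t ∈ U) (g : ℕ → ℝ≥0∞) :
    ∑' n : {n : ι →₀ ℕ // ↑n.support ⊆ U}, g (n.1 t) * (n.1.erase t).prod f =
      (∑' m, g m) * supportedProdSum f (U \ {t}) := by
  rw [← (supportedEraseEquiv ht).symm.tsum_eq, ENNReal.tsum_prod', ← ENNReal.tsum_mul_right]
  refine tsum_congr fun m => ?_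
  rw [supportedProdSum, ← ENNReal.tsum_mul_left]
  refine tsum_congr fun n => ?_
  have hn : n.1 t = 0 := Finsupp.support_subset_iff.1 n.2 t (by simp)
  classical
  simp [supportedEraseEquiv, Finsupp.update_apply, Finsupp.erase_of_notMem_support, hn]

theorem supportedProdSum_eq_mul (hf : ∀ i, f i 0 = 1) {U : Set ι} {t : ι} (ht : t ∈ U) :
    supportedProdSum f U = (∑' m, f t m) * supportedProdSum f (U \ {t}) := by
  rw [← tsum_mul_prod_erase f ht, supportedProdSum]
  exact tsum_congr fun n => (n.1.mul_prod_erase' t f hf).symm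

theorem supportedProdSum_empty : supportedProdSum f ∅ = 1 := by
  have h (n : {n : ι →₀ ℕ // ↑n.support ⊆ (∅ : Set ι)}) : n.1 = 0 := by simpa using n.2
  rw [supportedProdSum, tsum_eq_single ⟨0, by simp⟩ fun n hn => (hn (Subtype.ext (h n))).elim]
  exact Finsupp.prod_zero_index

theorem supportedProdSum_finset [DecidableEq ι] (hf : ∀ i, f i 0 = 1) (F : Finset ι) :
    supportedProdSum f F = ∏ i ∈ F, ∑' m, f i m := by
  induction F using Finset.induction_on with
  | empty => simpa using supportedProdSum_empty f
  | insert i F hi ih =>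
    rw [prod_insert hi, ← ih, supportedProdSum_eq_mul f hf (mem_coe.2 (mem_insert_self i F)),
      coe_insert, Set.insert_sdiff_self_of_notMem (by simpa using hi)]

theorem supportedProdSum_mono {U V : Set ι} (h : U ⊆ V) :
    supportedProdSum f U ≤ supportedProdSum f V := by
  let e (n : {n : ι →₀ ℕ // ↑n.support ⊆ U}) : {n : ι →₀ ℕ // ↑n.support ⊆ V} := ⟨n.1, n.2.trans h⟩
  have he : Function.Injective e := fun a b hab => Subtype.ext (Subtype.mk.inj hab)
  exact ENNReal.tsum_comp_le_tsum_of_injective he fun n => n.1.prod f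

theorem sum_le_supportedProdSum_sup [DecidableEq ι] {U : Set ι} (N : Finset {n : ι →₀ ℕ // ↑n.support ⊆ U}) :
    ∑ n ∈ N, n.1.prod f ≤ supportedProdSum f ↑(N.sup fun n => n.1.support) := by
  let e (n : N) : {n : ι →₀ ℕ // ↑n.support ⊆ ↑(N.sup fun n => n.1.support)} :=
    ⟨n.1.1, coe_subset.2 (le_sup (f := fun n => n.1.support) n.2)⟩
  have he : Function.Injective e := fun a b hab => Subtype.ext (Subtype.ext (Subtype.mk.inj hab))
  rw [← Finset.tsum_subtype N]
  exact ENNReal.tsum_comp_le_tsum_of_injective he fun n => n.1.prod f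

theorem supportedProdSum_eq_iSup [DecidableEq ι] (hf : ∀ i, f i 0 = 1) (U : Set ι) :
    supportedProdSum f U = ⨆ (F : Finset ι) (_ : ↑F ⊆ U), ∏ i ∈ F, ∑' m, f i m := by
  refine le_antisymm ?_ (iSup₂_le fun F hF => ?_)
  · rw [supportedProdSum, ENNReal.tsum_eq_iSup_sum]
    refine iSup_le fun N => (sum_le_supportedProdSum_sup f N).trans ?_
    rw [supportedProdSum_finset f hf]
    refine le_iSup₂_of_le _ (fun i hi => ?_) le_rfl
    obtain ⟨n, -, hn⟩ := mem_sup.1 (mem_coe.1 hi)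
    exact n.2 hn
  · rw [← supportedProdSum_finset f hf]
    exact supportedProdSum_mono f hF

end EulerProduct

section Series

variable {𝕜 : Type*} [NormedField 𝕜] {r : 𝕜}

theorem hasSum_multichoose_mul_geometric (k : ℕ) (hr : ‖r‖ < 1) :
    HasSum (fun m => (k.multichoose m : 𝕜) * r ^ m) ((1 - r) ^ k)⁻¹ := by
  cases k with
  | zero =>
    convert hasSum_ite_eq 0 (1 : 𝕜) using 1
    · ext m
      cases m <;> simp
    · simp
  | succ k =>
    convert hasSum_choose_mul_geometric_of_norm_lt_one k hr using 2 with m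
    · rw [Nat.multichoose_eq, show k + 1 + m - 1 = m + k by omega, Nat.choose_symm_add]
    · rw [one_div]

theorem hasSum_choose_add_sub_one_mul_geometric {k : ℕ} (hk : k ≠ 0) (hr : ‖r‖ < 1) :
    HasSum (fun m => ((m + k - 1).choose k : 𝕜) * r ^ m) (r / (1 - r) ^ (k + 1)) := by
  rw [← hasSum_nat_add_iff' 1, sum_range_one, zero_add,
    Nat.choose_eq_zero_of_lt (Nat.sub_one_lt hk), Nat.cast_zero, zero_mul, sub_zero]
  have h := (hasSum_choose_mul_geometric_of_norm_lt_one k hr).mul_left r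
  rw [mul_one_div] at h
  refine h.congr_fun fun m => ?_
  rw [add_right_comm, add_tsub_cancel_right, pow_succ]
  ring

end Series

section RealSeries

variable {q : ℝ}

theorem one_sub_pow_pos (hq0 : 0 ≤ q) (hq1 : q < 1) {u : ℕ} (hu : u ≠ 0) : 0 < 1 - q ^ u :=
  sub_pos.2 (pow_lt_one₀ hq0 hq1 hu)

theorem one_sub_pow_nonneg (hq0 : 0 ≤ q) (hq1 : q ≤ 1) (u : ℕ) : 0 ≤ 1 - q ^ u :=
  sub_nonneg.2 (pow_le_one₀ hq0 hq1)

theorem summable_succ_mul_pow_div (s : ℕ) (hq0 : 0 ≤ q) (hq1 : q < 1) :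
    Summable fun m : ℕ => (m + 1 : ℝ) * q ^ (s + 1 + m) / (1 - q ^ (s + 1 + m)) := by
  have hq : ‖q‖ < 1 := by rwa [Real.norm_of_nonneg hq0]
  have hgeom : Summable fun m : ℕ => (m + 1 : ℝ) * q ^ m / (1 - q) := by
    simpa using (summable_choose_mul_geometric_of_norm_lt_one 1 hq).div_const (1 - q)
  refine hgeom.of_nonneg_of_le (fun m => div_nonneg (by positivity) (one_sub_pow_nonneg hq0 hq1.le _))
    fun m => ?_
  have hle : q ^ (s + 1 + m) ≤ q ^ m := pow_le_pow_of_le_one hq0 hq1.le (by omega)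
  have hle' : q ^ (s + 1 + m) ≤ q := pow_le_of_le_one hq0 hq1.le (by omega)
  exact div_le_div₀ (by positivity) (by gcongr) (by linarith) (by linarith)

theorem hasSum_natSub_mul_div {s : ℕ} {S : ℝ}
    (hS : HasSum (fun m : ℕ => (m + 1 : ℝ) * q ^ (s + 1 + m) / (1 - q ^ (s + 1 + m))) S) :
    HasSum (fun t : ℕ => ((t - s : ℕ) : ℝ) * (q ^ t / (1 - q ^ t))) S := by
  rw [← (add_right_injective (s + 1)).hasSum_iff fun t ht => ?_]
  · refine hS.congr_fun fun m => ?_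
    rw [Function.comp_apply, show s + 1 + m - s = m + 1 by omega]
    push_cast
    ring
  · have : t ≤ s := by
      contrapose! ht
      exact ⟨t - (s + 1), show s + 1 + (t - (s + 1)) = t by omega⟩
    simp [Nat.sub_eq_zero_of_le this]

theorem neg_log_one_sub_le_div {x : ℝ} (hx : x < 1) : -Real.log (1 - x) ≤ x / (1 - x) := by
  have h := Real.one_sub_inv_le_log_of_pos (sub_pos.2 hx)
  have : (1 - x)⁻¹ - 1 = x / (1 - x) := by
    field_simp [(sub_pos.2 hx).ne']
    ring
  linarith

theorem multipliable_inv_one_sub_pow_pow (K : ℕ) (hq0 : 0 ≤ q) (hq1 : q < 1) :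
    Multipliable fun u : ℕ => ((1 - q ^ (u + 1)) ^ (K * (u + 1)))⁻¹ := by
  have hy (u : ℕ) : 0 < 1 - q ^ (u + 1) := one_sub_pow_pos hq0 hq1 u.succ_ne_zero
  refine Real.multipliable_of_summable_log (fun u => inv_pos.2 (pow_pos (hy u) _)) ?_
  refine ((summable_succ_mul_pow_div 0 hq0 hq1).mul_left (K : ℝ)).of_nonneg_of_le
    (fun u => Real.log_nonneg ?_) fun u => ?_
  · exact (one_le_inv₀ (pow_pos (hy u) _)).2 (pow_le_one₀ (hy u).le (sub_le_self 1 (by positivity)))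
  · calc Real.log ((1 - q ^ (u + 1)) ^ (K * (u + 1)))⁻¹
        = (K * (u + 1) : ℝ) * -Real.log (1 - q ^ (u + 1)) := by
          rw [Real.log_inv, Real.log_pow]
          push_cast
          ring
      _ ≤ (K * (u + 1) : ℝ) * (q ^ (u + 1) / (1 - q ^ (u + 1))) := by
          gcongr
          exact neg_log_one_sub_le_div (pow_lt_one₀ hq0 hq1 u.succ_ne_zero)
      _ = _ := by rw [show 0 + 1 + u = u + 1 by omega]; ring

end RealSeries

theorem hasSum_iff_tsum_ofReal_eq {β : Type*} {g : β → ℝ} {a : ℝ} (hg : ∀ b, 0 ≤ g b)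
    (ha : 0 ≤ a) : HasSum g a ↔ ∑' b, ENNReal.ofReal (g b) = ENNReal.ofReal a := by
  refine ⟨fun h => by rw [← ENNReal.ofReal_tsum_of_nonneg hg h.summable, h.tsum_eq], fun h => ?_⟩
  have hs : Summable g := (ENNReal.summable_toReal (h ▸ ENNReal.ofReal_ne_top)).congr fun b =>
    ENNReal.toReal_ofReal (hg b)
  rwa [hs.hasSum_iff, ← ENNReal.ofReal_eq_ofReal_iff (tsum_nonneg hg) ha,
    ENNReal.ofReal_tsum_of_nonneg hg hs]

theorem HasProd.ennrealOfReal {ι : Type*} {b : ι → ℝ} {P : ℝ} (hb : ∀ i, 0 ≤ b i)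
    (h : HasProd b P) : HasProd (fun i => ENNReal.ofReal (b i)) (ENNReal.ofReal P) :=
  ((ENNReal.continuous_ofReal.tendsto P).comp h).congr fun _ =>
    ENNReal.ofReal_prod_of_nonneg fun i _ => hb i

/-- At level `0` the weight is `1` for `m = 0` and `0` otherwise (`multichoose 0 m = 0` for
`m ≠ 0`), so level `0` contributes the factor `1` to the Euler product. -/
noncomputable def levelWeight (K : ℕ) (q : ℝ) (u m : ℕ) : ℝ≥0∞ :=
  ENNReal.ofReal ((u * K).multichoose m * q ^ (u * m))

noncomputable def markedWeight (K : ℕ) (q : ℝ) (t m : ℕ) : ℝ≥0∞ :=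
  ENNReal.ofReal ((m + t * K - 1).choose (t * K) * q ^ (t * m))

section Weights

variable {K : ℕ} {q : ℝ}

theorem levelWeight_zero_right (K : ℕ) (q : ℝ) (u : ℕ) : levelWeight K q u 0 = 1 := by
  simp [levelWeight]

theorem tsum_levelWeight (hq0 : 0 ≤ q) (hq1 : q < 1) (u : ℕ) :
    ∑' m, levelWeight K q u m = ENNReal.ofReal ((1 - q ^ u) ^ (u * K))⁻¹ := by
  rcases eq_or_ne u 0 with rfl | hu
  · rw [tsum_eq_single 0 fun m hm => ?_]
    · simp [levelWeight]
    · obtain ⟨m, rfl⟩ := Nat.exists_eq_succ_of_ne_zero hm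
      simp [levelWeight]
  have hx : ‖q ^ u‖ < 1 := by
    rw [Real.norm_of_nonneg (by positivity)]
    exact pow_lt_one₀ hq0 hq1 hu
  have h := hasSum_multichoose_mul_geometric (u * K) hx
  simp only [levelWeight, pow_mul q]
  rw [← ENNReal.ofReal_tsum_of_nonneg (fun m => by positivity) h.summable, h.tsum_eq]

theorem tsum_markedWeight (hK : K ≠ 0) (hq0 : 0 ≤ q) (hq1 : q < 1) {t : ℕ} (ht : t ≠ 0) :
    ∑' m, markedWeight K q t m = ENNReal.ofReal (q ^ t / (1 - q ^ t) ^ (t * K + 1)) := by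
  have hx : ‖q ^ t‖ < 1 := by
    rw [Real.norm_of_nonneg (by positivity)]
    exact pow_lt_one₀ hq0 hq1 ht
  have h := hasSum_choose_add_sub_one_mul_geometric (Nat.mul_ne_zero ht hK) hx
  simp only [markedWeight, pow_mul q]
  rw [← ENNReal.ofReal_tsum_of_nonneg (fun m => by positivity) h.summable, h.tsum_eq]

theorem hasProd_tsum_levelWeight (hq0 : 0 ≤ q) (hq1 : q < 1) {P : ℝ}
    (hP : HasProd (fun u : ℕ => ((1 - q ^ (u + 1)) ^ (K * (u + 1)))⁻¹) P) :
    HasProd (fun u => ∑' m, levelWeight K q u m) (ENNReal.ofReal P) := by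
  have hb : HasProd (fun u : ℕ => ((1 - q ^ u) ^ (u * K))⁻¹) P := by
    rw [← Nat.succ_injective.hasProd_iff fun u hu => ?_]
    · simpa [Function.comp_def, mul_comm] using hP
    · obtain rfl : u = 0 := by simpa using hu
      simp
  simp only [tsum_levelWeight hq0 hq1]
  exact hb.ennrealOfReal fun u => by have := one_sub_pow_nonneg hq0 hq1.le u; positivity

theorem supportedProdSum_levelWeight_compl_zero (hq0 : 0 ≤ q) (hq1 : q < 1) {P : ℝ}
    (hP : HasProd (fun u : ℕ => ((1 - q ^ (u + 1)) ^ (K * (u + 1)))⁻¹) P) :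
    supportedProdSum (levelWeight K q) {0}ᶜ = ENNReal.ofReal P := by
  have h1 (u : ℕ) : 1 ≤ ∑' m, levelWeight K q u m :=
    levelWeight_zero_right K q u ▸ ENNReal.le_tsum 0
  have h0 : ∑' m, levelWeight K q 0 m = 1 := by simp [tsum_levelWeight hq0 hq1]
  rw [supportedProdSum_eq_iSup _ (levelWeight_zero_right K q),
    ← (isLUB_hasProd h1 (hasProd_tsum_levelWeight hq0 hq1 hP)).iSup_eq]
  refine le_antisymm (iSup₂_le fun F _ => le_iSup_of_le F le_rfl) (iSup_le fun F => ?_)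
  rw [← Finset.prod_erase F h0]
  exact le_iSup₂_of_le (F.erase 0) (by simp) le_rfl

theorem supportedProdSum_levelWeight_compl_pair (hq0 : 0 ≤ q) (hq1 : q < 1) {P : ℝ}
    (hP : HasProd (fun u : ℕ => ((1 - q ^ (u + 1)) ^ (K * (u + 1)))⁻¹) P) {t : ℕ} (ht : t ≠ 0) :
    supportedProdSum (levelWeight K q) ({0}ᶜ \ {t}) =
      ENNReal.ofReal (P * (1 - q ^ t) ^ (t * K)) := by
  have hy : 0 < (1 - q ^ t) ^ (t * K) := pow_pos (one_sub_pow_pos hq0 hq1 ht) _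
  have h := supportedProdSum_eq_mul _ (levelWeight_zero_right K q)
    (show t ∈ ({0}ᶜ : Set ℕ) from ht)
  rw [supportedProdSum_levelWeight_compl_zero hq0 hq1 hP, tsum_levelWeight hq0 hq1] at h
  rw [← ENNReal.mul_right_inj (ENNReal.ofReal_pos.2 (inv_pos.2 hy)).ne' ENNReal.ofReal_ne_top, ← h,
    ← ENNReal.ofReal_mul (inv_pos.2 hy).le]
  congr 1
  field_simp

theorem tsum_natSub_mul_markedWeight_mul_prod (hK : K ≠ 0) (hq0 : 0 ≤ q) (hq1 : q < 1) {P : ℝ}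
    (hP : HasProd (fun u : ℕ => ((1 - q ^ (u + 1)) ^ (K * (u + 1)))⁻¹) P) (s t : ℕ) :
    ∑' n : {n : ℕ →₀ ℕ // ↑n.support ⊆ ({0}ᶜ : Set ℕ)}, ((t - s : ℕ) : ℝ≥0∞) *
        (markedWeight K q t (n.1 t) * (n.1.erase t).prod (levelWeight K q)) =
      ENNReal.ofReal ((t - s : ℕ) * (q ^ t / (1 - q ^ t)) * P) := by
  rcases eq_or_ne t 0 with rfl | ht
  · simp
  have hy : 0 < 1 - q ^ t := one_sub_pow_pos hq0 hq1 ht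
  rw [ENNReal.tsum_mul_left, tsum_mul_prod_erase _ (show t ∈ ({0}ᶜ : Set ℕ) from ht),
    tsum_markedWeight hK hq0 hq1 ht, supportedProdSum_levelWeight_compl_pair hq0 hq1 hP ht,
    ← ENNReal.ofReal_natCast, ← ENNReal.ofReal_mul (by positivity),
    ← ENNReal.ofReal_mul (by positivity)]
  congr 1
  field_simp
  ring

theorem alphaW_eq_sum_support (hK : K ≠ 0) (s : ℕ) {n : ℕ →₀ ℕ} (hn : n 0 = 0) :
    alphaW K s n = ∑ t ∈ n.support, (t - s) * (n t + t * K - 1).choose (t * K) *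
      ∏ u ∈ n.support.erase t, (u * K).multichoose (n u) := by
  have hpos {u : ℕ} (hu : n u ≠ 0) : 1 ≤ u := Nat.one_le_iff_ne_zero.2 fun h => hu (h ▸ hn)
  have hinner (t : ℕ) : ∏ᶠ u ∈ {u : ℕ | 1 ≤ u ∧ u ≠ t}, (n u + u * K - 1).choose (n u) =
      ∏ u ∈ n.support.erase t, (u * K).multichoose (n u) := by
    rw [finprod_cond_eq_prod_of_cond_iff _ fun {u} hu => ?_]
    · exact prod_congr rfl fun u _ => by rw [Nat.multichoose_eq, add_comm]
    · have hu : n u ≠ 0 := fun h => hu (by simp [h])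
      simp [hu, hpos hu]
  rw [alphaW, finsum_cond_eq_sum_of_cond_iff _ fun {t} ht => ?_]
  · exact sum_congr rfl fun t _ => by rw [hinner]
  · have hst : s < t := by
      by_contra! h
      simp [Nat.sub_eq_zero_of_le h] at ht
    have htK : t * K ≠ 0 := Nat.mul_ne_zero (by omega) hK
    have hnt : n t ≠ 0 := fun h => ht (by simp [h, Nat.choose_eq_zero_of_lt (Nat.sub_one_lt htK)])
    simp [hnt, hst]

theorem ofReal_alphaW_mul_pow (hK : K ≠ 0) (hq0 : 0 ≤ q) (s : ℕ) {n : ℕ →₀ ℕ} (hn : n 0 = 0) :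
    ENNReal.ofReal (alphaW K s n * q ^ (∑ j ∈ n.support, j * n j)) =
      ∑' t, ((t - s : ℕ) : ℝ≥0∞) *
        (markedWeight K q t (n t) * (n.erase t).prod (levelWeight K q)) := by
  rw [tsum_eq_sum (s := n.support) fun t ht => ?_]
  · rw [alphaW_eq_sum_support hK s hn, Nat.cast_sum, sum_mul,
      ENNReal.ofReal_sum_of_nonneg fun t _ => by positivity]
    refine sum_congr rfl fun t ht => ?_
    have herase : (n.erase t).prod (levelWeight K q) =
        ∏ u ∈ n.support.erase t, levelWeight K q u (n u) := by
      rw [Finsupp.prod, Finsupp.support_erase]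
      exact prod_congr rfl fun u hu => by rw [Finsupp.erase_ne (ne_of_mem_erase hu)]
    simp only [herase, markedWeight, levelWeight]
    rw [← ENNReal.ofReal_natCast, ← ENNReal.ofReal_prod_of_nonneg fun u _ => by positivity,
      ← ENNReal.ofReal_mul (by positivity), ← ENNReal.ofReal_mul (by positivity),
      ← prod_pow_eq_pow_sum, ← mul_prod_erase _ _ ht, prod_mul_distrib]
    congr 1
    push_cast
    ring
  · rw [Finsupp.notMem_support_iff.1 ht]
    rcases Nat.lt_or_ge s t with hst | hst
    · have : markedWeight K q t 0 = 0 := by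
        rw [markedWeight, zero_add,
          Nat.choose_eq_zero_of_lt (Nat.sub_one_lt (Nat.mul_ne_zero (by omega) hK))]
        simp
      simp [this]
    · simp [Nat.sub_eq_zero_of_le hst]

theorem tsum_ofReal_alphaW_mul_pow (hK : K ≠ 0) (hq0 : 0 ≤ q) (hq1 : q < 1) {P : ℝ}
    (hP : HasProd (fun u : ℕ => ((1 - q ^ (u + 1)) ^ (K * (u + 1)))⁻¹) P) (s : ℕ) :
    ∑' n : {n : ℕ →₀ ℕ // n 0 = 0},
        ENNReal.ofReal (alphaW K s n.1 * q ^ (∑ j ∈ n.1.support, j * n.1 j)) =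
      ∑' t : ℕ, ENNReal.ofReal ((t - s : ℕ) * (q ^ t / (1 - q ^ t)) * P) := by
  have hsupp (n : ℕ →₀ ℕ) : n 0 = 0 ↔ ↑n.support ⊆ ({0}ᶜ : Set ℕ) := by simp
  rw [← (Equiv.subtypeEquivRight hsupp).symm.tsum_eq]
  simp only [Equiv.subtypeEquivRight_symm_apply_coe]
  calc _ = ∑' n : {n : ℕ →₀ ℕ // ↑n.support ⊆ ({0}ᶜ : Set ℕ)}, ∑' t : ℕ, ((t - s : ℕ) : ℝ≥0∞) *
        (markedWeight K q t (n.1 t) * (n.1.erase t).prod (levelWeight K q)) :=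
        tsum_congr fun n => ofReal_alphaW_mul_pow hK hq0 s ((hsupp n.1).2 n.2)
    _ = _ := by
      rw [ENNReal.tsum_comm]
      exact tsum_congr fun t => tsum_natSub_mul_markedWeight_mul_prod hK hq0 hq1 hP s t

end Weights

/-- The generating function of the `α_s(n)` over all finitely supported
`n : ℤ_{>0} → ℕ` converges and has the closed form
`(∑_{t=s+1}^∞ (t−s) q^t/(1−q^t)) · ∏_{u=1}^∞ (1−q^u)^{−Ku}`
(the infinite sum and the infinite product both converge). -/
theorem alphaW_generating_function (K s : ℕ) (hK : 1 ≤ K)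
    (q : ℝ) (hq0 : 0 < q) (hq1 : q < 1) :
    ∃ S P : ℝ,
      HasSum (fun m : ℕ =>
        ((m + 1 : ℝ)) * q ^ (s + 1 + m) / (1 - q ^ (s + 1 + m))) S ∧
      HasProd (fun u : ℕ => ((1 - q ^ (u + 1)) ^ (K * (u + 1)))⁻¹) P ∧
      HasSum (fun n : {n : ℕ →₀ ℕ // n 0 = 0} =>
        (alphaW K s n.val : ℝ) * q ^ (∑ j ∈ n.val.support, j * n.val j))
        (S * P) := by
  have hK' : K ≠ 0 := Nat.one_le_iff_ne_zero.1 hK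
  obtain ⟨P, hP⟩ := multipliable_inv_one_sub_pow_pow K hq0.le hq1
  obtain ⟨S, hS⟩ := summable_succ_mul_pow_div s hq0.le hq1
  refine ⟨S, P, hS, hP, ?_⟩
  have hP0 : 0 ≤ P := hP.nonneg fun u =>
    inv_nonneg.2 (pow_nonneg (one_sub_pow_nonneg hq0.le hq1.le _) _)
  have hterm (t : ℕ) : 0 ≤ ((t - s : ℕ) : ℝ) * (q ^ t / (1 - q ^ t)) * P := by
    have := one_sub_pow_nonneg hq0.le hq1.le t
    positivity
  have hSP := (hasSum_natSub_mul_div hS).mul_right P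
  rw [hasSum_iff_tsum_ofReal_eq (fun n => by positivity) (hSP.nonneg hterm),
    tsum_ofReal_alphaW_mul_pow hK' hq0.le hq1 hP s]
  exact (hasSum_iff_tsum_ofReal_eq hterm (hSP.nonneg hterm)).1 hSP
end

section
/- Let K ≥ 2 and s ≥ 1 be integers, let λ : Fin K → ℂ, and set b(X) = ∏_{i=1}^{K} (X − λ_i). Assume λ_1 − λ_2 = s, and that for every ordered pair (i, j) with i ≠ j other than (1,2) and (2,1), the difference λ_i − λ_j is not an integer. Then for every integer t ≥ 1, the degree of l.c.m.(b(X), b(X−1), …, b(X−t+1)) equals tK − max(t − s, 0). -/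
open Polynomial Finset

/-!
Since `λ₁ - λ₂ = s ≠ 0` and no other difference is an integer, the `λᵢ` are distinct, so every
shift `b(X - m)` is a product of distinct linear factors and the l.c.m. of the shifts is the
product of `X - r` over the union of their root sets `{λᵢ + m}`. Two roots `λᵢ + m`, `λⱼ + n`
coincide only for `i = 1, j = 2, n = m + s` (or symmetrically), so the root set is parametrised
injectively by the `tK` pairs `(m, i)` with the `t - s` pairs `(n, 2)`, `s ≤ n < t`, removed.
-/

section Lcm

variable {R ι : Type*} [Field R]

theorem prod_X_sub_C_dvd {A : Finset R} {p : R[X]} (h : ∀ r ∈ A, X - C r ∣ p) :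
    ∏ r ∈ A, (X - C r) ∣ p :=
  prod_dvd_of_coprime
    (fun _ _ _ _ hab => isCoprime_X_sub_C_of_isUnit_sub (sub_ne_zero_of_ne hab).isUnit) h

theorem natDegree_lcm_prod_X_sub_C [DecidableEq R] (s : Finset ι) (A : ι → Finset R) :
    (s.lcm fun i => ∏ r ∈ A i, (X - C r)).natDegree = (s.biUnion A).card := by
  have hlcm_dvd : s.lcm (fun i => ∏ r ∈ A i, (X - C r)) ∣ ∏ r ∈ s.biUnion A, (X - C r) :=
    Finset.lcm_dvd fun _ hi => prod_dvd_prod_of_subset _ _ _ (subset_biUnion_of_mem A hi)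
  have hdvd_lcm : ∏ r ∈ s.biUnion A, (X - C r) ∣ s.lcm (fun i => ∏ r ∈ A i, (X - C r)) :=
    prod_X_sub_C_dvd fun r hr => by
      obtain ⟨i, hi, hr⟩ := mem_biUnion.1 hr
      exact (dvd_prod_of_mem (fun r => X - C r) hr).trans (dvd_lcm hi)
  rw [natDegree_eq_of_degree_eq
    (degree_eq_degree_of_associated (associated_of_dvd_dvd hlcm_dvd hdvd_lcm))]
  simp

end Lcm

theorem prod_X_sub_C_comp_X_sub_C {R κ : Type*} [CommRing R] (s : Finset κ) (v : κ → R) (c : R) :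
    (∏ i ∈ s, (X - C (v i))).comp (X - C c) = ∏ i ∈ s, (X - C (v i + c)) := by
  rw [Polynomial.prod_comp]
  refine prod_congr rfl fun i _ => ?_
  simp only [sub_comp, X_comp, C_comp, C_add]
  ring

section ShiftedRoots

variable {κ : Type*} {lam : κ → ℂ} {i₀ i₁ : κ} {s : ℕ}

theorem eq_of_add_natCast_eq (h01 : lam i₀ - lam i₁ = s)
    (hint : ∀ i j, i ≠ j → ∀ k : ℤ, lam i - lam j = k → (i = i₀ ∧ j = i₁) ∨ (i = i₁ ∧ j = i₀))
    {i j : κ} {m n : ℕ} (h : lam i + m = lam j + n) :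
    (i = j ∧ m = n) ∨ (i = i₀ ∧ j = i₁ ∧ n = m + s) ∨ (i = i₁ ∧ j = i₀ ∧ m = n + s) := by
  by_cases hij : i = j
  · subst hij
    exact Or.inl ⟨rfl, by exact_mod_cast add_left_cancel h⟩
  have hk : lam i - lam j = ((n - m : ℤ) : ℂ) := by push_cast; linear_combination h
  rcases hint i j hij _ hk with ⟨rfl, rfl⟩ | ⟨rfl, rfl⟩
  · refine Or.inr (Or.inl ⟨rfl, rfl, ?_⟩)
    have : ((s : ℤ) : ℂ) = ((n - m : ℤ) : ℂ) := by rw [← hk, h01]; rfl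
    have := Int.cast_injective this
    omega
  · refine Or.inr (Or.inr ⟨rfl, rfl, ?_⟩)
    have : ((s : ℤ) : ℂ) = ((m - n : ℤ) : ℂ) := by push_cast; linear_combination -h - h01
    have := Int.cast_injective this
    omega

theorem card_image_add_natCast [Fintype κ] [DecidableEq κ] (h01 : lam i₀ - lam i₁ = s)
    (hne : i₀ ≠ i₁)
    (hint : ∀ i j, i ≠ j → ∀ k : ℤ, lam i - lam j = k → (i = i₀ ∧ j = i₁) ∨ (i = i₁ ∧ j = i₀))
    (t : ℕ) :
    ((range t ×ˢ univ).image fun p : ℕ × κ => lam p.2 + p.1).card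
      = t * Fintype.card κ - (t - s) := by
  set g : ℕ × κ → ℂ := fun p => lam p.2 + p.1
  set W : Finset (ℕ × κ) := range t ×ˢ univ
  -- the duplicates: `λ₂ + n = λ₁ + (n - s)` for `s ≤ n < t`
  set B : Finset (ℕ × κ) := Ico s t ×ˢ {i₁}
  have hmemW : ∀ {m i}, (m, i) ∈ W ↔ m < t := by simp [W]
  have hmemB : ∀ {m i}, (m, i) ∈ B ↔ s ≤ m ∧ m < t ∧ i = i₁ := by
    simp [B, and_assoc, eq_comm]
  have hBW : B ⊆ W := fun ⟨m, i⟩ hp => hmemW.2 (hmemB.1 hp).2.1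
  have himage : (W \ B).image g = W.image g := by
    refine (image_subset_image sdiff_subset).antisymm fun r hr => ?_
    obtain ⟨⟨m, i⟩, hmW, rfl⟩ := mem_image.1 hr
    by_cases hmB : (m, i) ∈ B
    · obtain ⟨hsm, hmt, rfl⟩ := hmemB.1 hmB
      have hmem : (m - s, i₀) ∈ W \ B :=
        mem_sdiff.2 ⟨hmemW.2 (by omega), fun h => hne (hmemB.1 h).2.2⟩
      refine mem_image.2 ⟨_, hmem, ?_⟩
      simp only [g, Nat.cast_sub hsm]
      linear_combination h01
    · exact mem_image.2 ⟨(m, i), mem_sdiff.2 ⟨hmW, hmB⟩, rfl⟩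
  have hinj : Set.InjOn g ↑(W \ B) := by
    rintro ⟨m, i⟩ hp ⟨n, j⟩ hq hpq
    rw [mem_coe, mem_sdiff, hmemW, hmemB] at hp hq
    rcases eq_of_add_natCast_eq h01 hint hpq with ⟨rfl, rfl⟩ | ⟨-, rfl, rfl⟩ | ⟨rfl, -, rfl⟩
    · rfl
    · exact absurd ⟨by omega, hq.1, rfl⟩ hq.2
    · exact absurd ⟨by omega, hp.1, rfl⟩ hp.2
  rw [← himage, card_image_of_injOn hinj, card_sdiff_of_subset hBW]
  simp [W, B, card_product]

end ShiftedRoots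

/-- Let `b(X) = ∏_{i=1}^K (X − λ_i)` with `K ≥ 2`, `λ_1 − λ_2 = s ≥ 1` a positive
integer, and all other differences `λ_i − λ_j` (for ordered pairs `(i,j)`, `i ≠ j`,
other than `(1,2)` and `(2,1)`) not integers.  Then for every `t ≥ 1` the degree of
`l.c.m.(b(X), b(X−1), …, b(X−t+1))` equals `tK − max(t − s, 0)`. -/
theorem degree_lcm_shifted (K s : ℕ) (hK : 2 ≤ K) (hs : 1 ≤ s)
    (lam : Fin K → ℂ)
    (h12 : lam ⟨0, by omega⟩ - lam ⟨1, by omega⟩ = (s : ℂ))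
    (hgen : ∀ i j : Fin K, i ≠ j →
      ¬(i = ⟨0, by omega⟩ ∧ j = ⟨1, by omega⟩) →
      ¬(i = ⟨1, by omega⟩ ∧ j = ⟨0, by omega⟩) →
      ∀ k : ℤ, lam i - lam j ≠ (k : ℂ))
    (t : ℕ) :
    ((range t).lcm fun m =>
        (∏ i : Fin K, (X - Polynomial.C (lam i))).comp
          (X - Polynomial.C (m : ℂ))).natDegree
      = t * K - (t - s) := by
  have hint : ∀ i j, i ≠ j → ∀ k : ℤ, lam i - lam j = k →
      (i = ⟨0, by omega⟩ ∧ j = ⟨1, by omega⟩) ∨ (i = ⟨1, by omega⟩ ∧ j = ⟨0, by omega⟩) :=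
    fun i j hij k hk => by_contra fun h => hgen i j hij (not_or.1 h).1 (not_or.1 h).2 k hk
  have hinj : Function.Injective lam := fun i j h => by
    have := eq_of_add_natCast_eq (m := 0) (n := 0) h12 hint (by simpa using h)
    omega
  have hshift : ∀ m : ℕ, (∏ i : Fin K, (X - C (lam i))).comp (X - C (m : ℂ))
      = ∏ r ∈ univ.image (fun i => lam i + m), (X - C r) := fun m => by
    rw [prod_X_sub_C_comp_X_sub_C, prod_image fun i _ j _ h => hinj (add_right_cancel h)]
  have hroots : (range t).biUnion (fun m => univ.image fun i => lam i + m)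
      = (range t ×ˢ univ).image fun p : ℕ × Fin K => lam p.2 + p.1 := by
    ext; simp [and_comm]
  simp_rw [hshift]
  rw [natDegree_lcm_prod_X_sub_C, hroots,
    card_image_add_natCast h12 (by simp [Fin.ext_iff]) hint, Fintype.card_fin]
end

section
/- Let Y be a Young diagram, with cells (i, j) indexed by 0-based row index i and column index j; the content of cell (i, j) is j − i. Let h be the number of diagonal cells of Y (cells of the form (i, i)), and for each i with 0 ≤ i < h set m_i = (length of row i of Y) − i ≥ 1 (the arm of the i-th principal hook, including the diagonal cell) and n_i = (length of column i of Y) − i − 1 ≥ 0 (the leg of the i-th principal hook). Then for every complex number C: ∏_{(i,j) ∈ Y} (C − (j − i)) = ∏_{i=0}^{h−1} ( ∏_{t=0}^{m_i − 1} (C − t) ) · ( ∏_{t=1}^{n_i} (C + t) ). -/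
/-!
Sorting the cells `(a, b)` of `Y` by `min a b` partitions `Y` into its principal hooks; the
diagonal cells form an initial segment `(0,0), …, (h-1,h-1)`, so exactly the indices `i < h`
occur. The `i`-th hook consists of the arm cells `(i, i + t)`, `t < m_i`, of content `t`, and
the leg cells `(i + t, i)`, `1 ≤ t ≤ n_i`, of content `-t`.
-/

open Finset

namespace YoungDiagram

def diagLen (Y : YoungDiagram) : ℕ :=
  #(Y.cells.filter fun c => c.1 = c.2)

def principalHook (Y : YoungDiagram) (i : ℕ) : Finset (ℕ × ℕ) :=
  Y.cells.filter fun c => min c.1 c.2 = i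

theorem exists_diag_mem_iff_lt (Y : YoungDiagram) : ∃ d, ∀ i, (i, i) ∈ Y ↔ i < d := by
  have hlower : IsLowerSet {i | (i, i) ∈ Y} := fun _ _ hle hmem => Y.up_left_mem hle hle hmem
  rcases hlower.eq_univ_or_Iio with huniv | ⟨d, hd⟩
  · have hdiag : (Y.rowLen 0, Y.rowLen 0) ∈ Y := Set.eq_univ_iff_forall.mp huniv _
    have hrow : (0, Y.rowLen 0) ∈ Y := Y.up_left_mem (Nat.zero_le _) le_rfl hdiag
    exact absurd (mem_iff_lt_rowLen.mp hrow) (lt_irrefl _)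
  · exact ⟨d, fun i => Set.ext_iff.mp hd i⟩

theorem diagLen_eq {Y : YoungDiagram} {d : ℕ} (hd : ∀ i, (i, i) ∈ Y ↔ i < d) :
    Y.diagLen = d := by
  have hdiag : (Y.cells.filter fun c => c.1 = c.2) = (range d).image fun k => (k, k) := by
    ext ⟨a, b⟩
    simp only [mem_filter, mem_cells, mem_image, mem_range, Prod.mk.injEq]
    constructor
    · rintro ⟨hmem, rfl⟩
      exact ⟨a, (hd a).mp hmem, rfl, rfl⟩
    · rintro ⟨k, hk, rfl, rfl⟩
      exact ⟨(hd k).mpr hk, rfl⟩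
  rw [diagLen, hdiag, card_image_of_injective _ fun _ _ h => (Prod.mk.inj h).1, card_range]

theorem diag_mem_iff_lt_diagLen (Y : YoungDiagram) (i : ℕ) : (i, i) ∈ Y ↔ i < Y.diagLen := by
  obtain ⟨d, hd⟩ := Y.exists_diag_mem_iff_lt
  rw [diagLen_eq hd, hd]

theorem prod_cells_eq_prod_principalHook {M : Type*} [CommMonoid M] (Y : YoungDiagram)
    (f : ℕ × ℕ → M) :
    ∏ c ∈ Y.cells, f c = ∏ i ∈ range Y.diagLen, ∏ c ∈ Y.principalHook i, f c := by
  refine (prod_fiberwise_of_maps_to (fun c hc => ?_) f).symm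
  rw [mem_range, ← diag_mem_iff_lt_diagLen]
  exact Y.up_left_mem (min_le_left _ _) (min_le_right _ _) ((mem_cells _).mp hc)

theorem principalHook_eq (Y : YoungDiagram) (i : ℕ) :
    Y.principalHook i = ((range (Y.rowLen i - i)).image fun t => (i, i + t))
      ∪ ((Icc 1 (Y.colLen i - i - 1)).image fun t => (i + t, i)) := by
  ext ⟨a, b⟩
  simp only [principalHook, mem_filter, mem_cells, mem_union, mem_image, mem_range, mem_Icc,
    Prod.mk.injEq]
  constructor
  · rintro ⟨hmem, hmin⟩
    rcases le_or_gt a b with hab | hab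
    · obtain rfl : a = i := by omega
      have := mem_iff_lt_rowLen.mp hmem
      exact Or.inl ⟨b - a, by omega, rfl, by omega⟩
    · obtain rfl : b = i := by omega
      have := mem_iff_lt_colLen.mp hmem
      exact Or.inr ⟨a - b, by omega, by omega, rfl⟩
  · rintro (⟨t, ht, rfl, rfl⟩ | ⟨t, ht, rfl, rfl⟩)
    · exact ⟨mem_iff_lt_rowLen.mpr (by omega), by omega⟩
    · exact ⟨mem_iff_lt_colLen.mpr (by omega), by omega⟩

theorem prod_principalHook {M : Type*} [CommMonoid M] (Y : YoungDiagram) (i : ℕ)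
    (f : ℕ × ℕ → M) :
    ∏ c ∈ Y.principalHook i, f c
      = (∏ t ∈ range (Y.rowLen i - i), f (i, i + t))
        * ∏ t ∈ Icc 1 (Y.colLen i - i - 1), f (i + t, i) := by
  have hdisj : Disjoint ((range (Y.rowLen i - i)).image fun t => (i, i + t))
      ((Icc 1 (Y.colLen i - i - 1)).image fun t => (i + t, i)) := by
    simp only [disjoint_left, mem_image, mem_range, mem_Icc, not_exists, not_and]
    rintro _ ⟨t, -, rfl⟩ s hs heq
    simp only [Prod.mk.injEq] at heq
    omega
  rw [principalHook_eq, prod_union hdisj,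
    prod_image fun _ _ _ _ h => Nat.add_left_cancel (Prod.mk.inj h).2,
    prod_image fun _ _ _ _ h => Nat.add_left_cancel (Prod.mk.inj h).1]

end YoungDiagram

/-- Principal-hook factorization of the content product of a Young diagram.
With `h` the number of diagonal cells, `m_i = rowLen i − i` the arm (including
the diagonal cell) and `n_i = colLen i − i − 1` the leg of the `i`-th principal
hook, for every complex `C`:
`∏_{(i,j)∈Y} (C − (j−i)) = ∏_{i<h} (∏_{t=0}^{m_i−1} (C−t)) · (∏_{t=1}^{n_i} (C+t))`. -/
theorem content_product_hook_factorization (Y : YoungDiagram) (C : ℂ) :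
    ∏ c ∈ Y.cells, (C - ((c.2 : ℂ) - (c.1 : ℂ)))
      = ∏ i ∈ range ((Y.cells.filter fun c => c.1 = c.2).card),
          ((∏ t ∈ range (Y.rowLen i - i), (C - (t : ℂ))) *
            ∏ t ∈ Finset.Icc 1 (Y.colLen i - i - 1), (C + (t : ℂ))) := by
  rw [Y.prod_cells_eq_prod_principalHook]
  refine prod_congr rfl fun i _ => ?_
  rw [Y.prod_principalHook]
  push_cast
  congr 1 <;> refine prod_congr rfl fun t _ => by ring
end

section
/- Let C be a real number. Then the product ∏_{(i,j) ∈ Y} (C − (j − i)) is nonnegative for every Young diagram Y if and only if C is a nonnegative integer. -/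
/-!
Testing `C` against one-row diagrams gives `∏_{j<m} (C - j) ≥ 0` for every `m`; if `C` is not a
natural number, the row of length `⌈C⌉₊ + 1` has all factors positive except the last one,
`C - ⌈C⌉₊ < 0`. Conversely, for `C = n` and any diagram `Y`, either every cell has content `< n`
and all factors are positive, or some cell `(i, j)` has `j ≥ i + n`, and then the cell `(i, i + n)`
of content exactly `n` lies in `Y` and kills the product.
-/

open Finset

namespace YoungDiagram

def ofRow (m : ℕ) : YoungDiagram :=
  ofRowLens [m] (List.pairwise_singleton _ m).sortedGE

theorem cells_ofRow (m : ℕ) : (ofRow m).cells = {0} ×ˢ range m := by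
  ext ⟨i, j⟩
  simp [ofRow, mem_ofRowLens, and_comm, eq_comm]

theorem prod_cells_ofRow {M : Type*} [CommMonoid M] (f : ℕ × ℕ → M) (m : ℕ) :
    ∏ c ∈ (ofRow m).cells, f c = ∏ j ∈ range m, f (0, j) := by
  rw [cells_ofRow, prod_product, prod_singleton]

end YoungDiagram

theorem prod_range_sub_ceil_neg {K : Type*} [Field K] [LinearOrder K] [IsStrictOrderedRing K]
    [FloorSemiring K] {C : K} (hC : ∀ n : ℕ, C ≠ n) :
    ∏ j ∈ range (⌈C⌉₊ + 1), (C - j) < 0 := by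
  rw [prod_range_succ]
  refine mul_neg_of_pos_of_neg (prod_pos fun j hj => ?_) ?_
  · exact sub_pos.2 (Nat.lt_ceil.1 (mem_range.1 hj))
  · exact sub_neg.2 ((Nat.le_ceil C).lt_of_ne (hC _))

theorem content_product_nat_nonneg {K : Type*} [Field K] [LinearOrder K] [IsStrictOrderedRing K]
    (n : ℕ) (Y : YoungDiagram) : 0 ≤ ∏ c ∈ Y.cells, ((n : K) - ((c.2 : K) - (c.1 : K))) := by
  by_cases hY : ∃ c ∈ Y, c.1 + n ≤ c.2
  · obtain ⟨⟨i, j⟩, hc, hij⟩ := hY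
    have hzero : (i, i + n) ∈ Y.cells := Y.up_left_mem le_rfl hij hc
    rw [prod_eq_zero hzero (by push_cast; ring)]
  · push Not at hY
    refine prod_nonneg fun c hc => ?_
    have hlt : (c.2 : K) < c.1 + n := by exact_mod_cast hY c hc
    linarith

/-- Unitarity condition for the `K = 1` quasifinite `W_{1+∞}` module: for a real
central charge `C`, the content product `∏_{(i,j)∈Y} (C − (j−i))` is nonnegative
for every Young diagram `Y` if and only if `C` is a nonnegative integer. -/
theorem content_product_nonneg_iff (C : ℝ) :
    (∀ Y : YoungDiagram, 0 ≤ ∏ c ∈ Y.cells, (C - ((c.2 : ℝ) - (c.1 : ℝ))))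
      ↔ ∃ n : ℕ, C = (n : ℝ) := by
  refine ⟨fun h => ?_, fun ⟨n, hn⟩ Y => hn ▸ content_product_nat_nonneg n Y⟩
  by_contra! hC
  have hrow := h (YoungDiagram.ofRow (⌈C⌉₊ + 1))
  rw [YoungDiagram.prod_cells_ofRow] at hrow
  simp only [Nat.cast_zero, sub_zero] at hrow
  exact (prod_range_sub_ceil_neg hC).not_ge hrow
end

section
/- Let n ≥ 1 and let u, v : Fin n → ℝ be tuples of pairwise distinct real numbers with 0 < u_i < 1 and 0 < v_i < 1 for all i. For a weakly decreasing function λ : Fin n → ℕ (a partition with at most n parts, columns 0-based), define the Schur polynomial value s_λ(u) = det(M_λ(u)) / det(M_0(u)), where M_λ(u) is the n × n matrix with entries (M_λ(u))_{ij} = u_i^{λ_j + n − 1 − j} and M_0(u) is the Vandermonde matrix with entries u_i^{n−1−j} (which has nonzero determinant since the u_i are distinct). Then the family (s_λ(u)·s_λ(v)), indexed by all weakly decreasing λ : Fin n → ℕ, is summable and ∑_λ s_λ(u)·s_λ(v) = ∏_{i=1}^{n} ∏_{j=1}^{n} (1 − u_i v_j)^{−1}. -/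
/-!
Expanding every entry of the Cauchy matrix `C = ((1 - u_i v_j)⁻¹)` into a geometric series
gives `det C = ∑_k a_k(u) ∏_j v_j ^ k_j` over all exponent vectors `k`, where
`a_k(u) = det (u_i ^ k_j)` is the alternant. Only injective `k` contribute; writing each of them
uniquely as `m ∘ π` with `m` strictly decreasing and `π` a permutation and summing over `π`
first leaves `∑_m a_m(u) a_m(v)`, and the strictly decreasing `m` are exactly the `λ + δ` with
`λ` a partition and `δ = (n-1, …, 1, 0)`. Cauchy's determinant formula
`det C = ∏_{i,j} (1 - u_i v_j)⁻¹ · a_δ(u) a_δ(v)` then yields the identity after division by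
the Vandermonde determinants `a_δ(u)`, `a_δ(v)`.
-/

open Finset Matrix

/-- The bialternant Schur polynomial value: for a partition `lam` with at most
`n` parts (a weakly decreasing `lam : Fin n → ℕ`) and variables `w : Fin n → ℝ`,
`s_lam(w) = det(w_i^{lam_j + n − 1 − j}) / det(w_i^{n − 1 − j})`. -/
noncomputable def schurVal (n : ℕ) (lam : Fin n → ℕ) (w : Fin n → ℝ) : ℝ :=
  (Matrix.of fun i j : Fin n => w i ^ (lam j + n - 1 - j.val)).det /
    (Matrix.of fun i j : Fin n => w i ^ (n - 1 - j.val)).det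

theorem hasSum_pi_prod_of_nonneg {κ : Type*} {m : ℕ} {f : Fin m → κ → ℝ}
    {a : Fin m → ℝ} (hf₀ : ∀ i k, 0 ≤ f i k) (hf : ∀ i, HasSum (f i) (a i)) :
    HasSum (fun k : Fin m → κ => ∏ i, f i (k i)) (∏ i, a i) := by
  induction m with
  | zero => simp
  | succ m ih =>
    have htail := ih (fun i k => hf₀ i.succ k) (fun i => hf i.succ)
    have htail₀ : 0 ≤ fun k : Fin m → κ => ∏ i, f i.succ (k i) :=
      fun k => prod_nonneg fun i _ => hf₀ i.succ (k i)
    have hsummable := (hf 0).summable.mul_of_nonneg htail.summable (hf₀ 0) htail₀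
    rw [Fin.prod_univ_succ, ← (Fin.consEquiv fun _ => κ).hasSum_iff]
    simpa [Function.comp_def, Fin.prod_univ_succ, Fin.consEquiv] using
      (hf 0).mul htail hsummable

theorem Matrix.det_succ_eq_mul_det_schur {K : Type*} [Field K] {n : ℕ}
    (A : Matrix (Fin (n + 1)) (Fin (n + 1)) K) (h : A 0 0 ≠ 0) :
    A.det = A 0 0 *
      (of fun i j : Fin n => A i.succ j.succ - A i.succ 0 / A 0 0 * A 0 j.succ).det := by
  set B : Matrix (Fin (n + 1)) (Fin (n + 1)) K :=
    of fun i j => if i = 0 then A 0 j else A i j - A i 0 / A 0 0 * A 0 j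
  have hAB : A.det = B.det := by
    refine det_eq_of_forall_row_eq_smul_add_const (fun i => if i = 0 then 0 else A i 0 / A 0 0) 0
      (by simp) fun i j => ?_
    by_cases hi : i = 0 <;> simp [B, hi]
  rw [hAB, det_succ_column_zero, Fin.sum_univ_succ, Finset.sum_eq_zero fun i _ => ?_]
  · simp [B, submatrix]
  · simp [B, h]

section Cauchy

variable {K : Type*} [Field K]

def cauchyMatrix {n : ℕ} (u v : Fin n → K) : Matrix (Fin n) (Fin n) K :=
  of fun i j => (1 - u i * v j)⁻¹

theorem inv_one_sub_mul_schur_entry {a b c d : K} (hac : 1 - a * c ≠ 0) (had : 1 - a * d ≠ 0)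
    (hbc : 1 - b * c ≠ 0) :
    (1 - a * c)⁻¹ - (1 - a * d)⁻¹ / (1 - b * d)⁻¹ * (1 - b * c)⁻¹ =
      (a - b) / (1 - a * d) * ((c - d) / (1 - b * c) * (1 - a * c)⁻¹) := by
  have hcb : 1 - c * b ≠ 0 := by rwa [mul_comm]
  rw [div_inv_eq_mul]
  field_simp
  ring

theorem det_cauchyMatrix {n : ℕ} (u v : Fin n → K) (h : ∀ i j, 1 - u i * v j ≠ 0) :
    (cauchyMatrix u v).det =
      (∏ i, ∏ j, (1 - u i * v j)⁻¹) * ((vandermonde u).det * (vandermonde v).det) := by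
  induction n with
  | zero => simp
  | succ n ih =>
    set C := cauchyMatrix u v
    -- Eliminating with the pivot `C 0 0` leaves the Cauchy matrix of the remaining variables,
    -- with row `i` rescaled by `(u_i - u_0) / (1 - u_i v_0)` and column `j` by
    -- `(v_j - v_0) / (1 - u_0 v_j)`.
    have hschur : (of fun i j : Fin n => C i.succ j.succ - C i.succ 0 / C 0 0 * C 0 j.succ) =
        of fun i j => (u i.succ - u 0) / (1 - u i.succ * v 0) *
          (of fun i j => (v j.succ - v 0) / (1 - u 0 * v j.succ) *
            cauchyMatrix (u ∘ Fin.succ) (v ∘ Fin.succ) i j) i j := by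
      ext i j
      exact inv_one_sub_mul_schur_entry (h _ _) (h _ _) (h _ _)
    rw [det_succ_eq_mul_det_schur _ (inv_ne_zero (h 0 0)), hschur, det_mul_column, det_mul_row,
      ih (u ∘ Fin.succ) (v ∘ Fin.succ) fun i j => h _ _, det_vandermonde, det_vandermonde,
      det_vandermonde, det_vandermonde]
    simp only [C, cauchyMatrix, of_apply, Function.comp_apply, Fin.prod_univ_succ,
      Fin.prod_Ioi_zero, Fin.prod_Ioi_succ, div_eq_mul_inv, prod_mul_distrib]
    ring

end Cauchy

section Sorting

variable {α : Type*} [LinearOrder α] {n : ℕ}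

theorem eq_of_strictAnti_comp_perm_eq {m m' : Fin n → α} (hm : StrictAnti m)
    (hm' : StrictAnti m') {π π' : Equiv.Perm (Fin n)} (h : m ∘ π = m' ∘ π') :
    m = m' ∧ π = π' := by
  have hm_comp : m = m' ∘ (π' ∘ π.symm) := by
    rw [← Function.comp_assoc, ← h, Function.comp_assoc, Equiv.self_comp_symm, Function.comp_id]
  have hmono : StrictMono (π' ∘ π.symm) := fun a b hab => by
    have := hm hab
    rw [hm_comp] at this
    exact hm'.lt_iff_gt.1 this
  have hππ' : π = π' := by
    refine Equiv.ext fun x => ?_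
    simpa using (congrFun hmono.eq_id (π x)).symm
  subst hππ'
  exact ⟨by simpa using hm_comp, rfl⟩

theorem exists_strictAnti_comp_perm_eq {k : Fin n → α} (hk : Function.Injective k) :
    ∃ m : Fin n → α, StrictAnti m ∧ ∃ π : Equiv.Perm (Fin n), m ∘ π = k := by
  set σ := Tuple.sort (OrderDual.toDual ∘ k)
  refine ⟨k ∘ σ, ?_, σ.symm, by ext; simp⟩
  exact Antitone.strictAnti_of_injective (Tuple.monotone_sort (OrderDual.toDual ∘ k))
    (hk.comp σ.injective)

noncomputable def strictAntiProdPermEquiv :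
    {m : Fin n → α // StrictAnti m} × Equiv.Perm (Fin n) ≃
      {k : Fin n → α // Function.Injective k} :=
  Equiv.ofBijective (fun p => ⟨p.1.1 ∘ p.2, p.1.2.injective.comp p.2.injective⟩) <| by
    refine ⟨fun ⟨⟨m, hm⟩, π⟩ ⟨⟨m', hm'⟩, π'⟩ h => ?_, fun ⟨k, hk⟩ => ?_⟩
    · obtain ⟨rfl, rfl⟩ := eq_of_strictAnti_comp_perm_eq hm hm' (congrArg Subtype.val h)
      rfl
    · obtain ⟨m, hm, π, rfl⟩ := exists_strictAnti_comp_perm_eq hk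
      exact ⟨⟨⟨m, hm⟩, π⟩, rfl⟩

end Sorting

section Staircase

def staircase (n : ℕ) : Fin n → ℕ := fun j => n - 1 - j

variable {n : ℕ}

theorem StrictAnti.add_sub_le_nat {f : Fin n → ℕ} (hf : StrictAnti f) {a b : Fin n}
    (hab : a ≤ b) : f b + (b - a : ℕ) ≤ f a := by
  have key : ∀ d (hd : a + d < n), f ⟨a + d, hd⟩ + d ≤ f a := by
    intro d
    induction d with
    | zero => simp
    | succ d ih =>
      intro hd
      have := ih (by omega)
      have := @hf ⟨a + d, by omega⟩ ⟨a + (d + 1), hd⟩ (Fin.mk_lt_mk.2 (by omega))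
      omega
  have hb : b = ⟨a + (b - a : ℕ), by omega⟩ := Fin.ext (by dsimp only; omega)
  simpa [← hb] using key (b - a) (by omega)

theorem staircase_le_of_strictAnti {m : Fin n → ℕ} (hm : StrictAnti m) :
    staircase n ≤ m := fun j => by
  have := j.isLt
  have := hm.add_sub_le_nat (a := j) (b := ⟨n - 1, by omega⟩)
    (Fin.le_def.2 (by dsimp only; omega))
  simp only [staircase] at this ⊢
  omega

theorem strictAnti_add_staircase {l : Fin n → ℕ} (hl : Antitone l) :
    StrictAnti (l + staircase n) := fun a b hab => by
  have := hl hab.le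
  have := Fin.lt_def.1 hab
  simp only [Pi.add_apply, staircase]
  omega

theorem antitone_sub_staircase {m : Fin n → ℕ} (hm : StrictAnti m) :
    Antitone (m - staircase n) := fun a b hab => by
  have := hm.add_sub_le_nat hab
  have := staircase_le_of_strictAnti hm b
  simp only [Pi.sub_apply, staircase] at this ⊢
  omega

end Staircase

def antitoneEquivStrictAnti (n : ℕ) :
    {l : Fin n → ℕ // Antitone l} ≃ {m : Fin n → ℕ // StrictAnti m} where
  toFun l := ⟨l.1 + staircase n, strictAnti_add_staircase l.2⟩
  invFun m := ⟨m.1 - staircase n, antitone_sub_staircase m.2⟩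
  left_inv l := by ext; simp
  right_inv m := by ext j; simp [Nat.sub_add_cancel (staircase_le_of_strictAnti m.2 j)]

section Alternant

variable {R : Type*} [CommRing R] {n : ℕ}

def alternant (w : Fin n → R) (k : Fin n → ℕ) : R :=
  (of fun i j => w i ^ k j).det

theorem alternant_eq_zero_of_not_injective (w : Fin n → R) {k : Fin n → ℕ}
    (hk : ¬ Function.Injective k) : alternant w k = 0 := by
  obtain ⟨a, b, hab, hne⟩ := Function.not_injective_iff.1 hk
  exact det_zero_of_column_eq hne fun i => by simp [hab]

theorem alternant_comp_perm (w : Fin n → R) (k : Fin n → ℕ) (σ : Equiv.Perm (Fin n)) :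
    alternant w (k ∘ σ) = Equiv.Perm.sign σ * alternant w k :=
  det_permute' σ (of fun i j => w i ^ k j)

theorem alternant_eq_sum_perm (w : Fin n → R) (k : Fin n → ℕ) :
    alternant w k = ∑ σ : Equiv.Perm (Fin n), Equiv.Perm.sign σ * ∏ j, w j ^ k (σ j) := by
  rw [alternant, ← det_transpose, det_apply']
  rfl

theorem sum_perm_alternant_mul_prod_pow (u v : Fin n → R) (k : Fin n → ℕ) :
    ∑ σ : Equiv.Perm (Fin n), alternant u (k ∘ σ) * ∏ j, v j ^ k (σ j) =
      alternant u k * alternant v k := by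
  simp only [alternant_comp_perm, alternant_eq_sum_perm v, mul_sum, mul_assoc, mul_left_comm]

theorem alternant_mul_prod_pow (u v : Fin n → R) (k : Fin n → ℕ) :
    alternant u k * ∏ j, v j ^ k j =
      ∑ σ : Equiv.Perm (Fin n), Equiv.Perm.sign σ * ∏ j, (u (σ j) * v j) ^ k j := by
  simp only [alternant, det_apply', sum_mul, of_apply, mul_pow, prod_mul_distrib, mul_assoc]

theorem alternant_staircase (w : Fin n → R) :
    alternant w (staircase n) =
      Equiv.Perm.sign (Fin.revPerm : Equiv.Perm (Fin n)) * (vandermonde w).det := by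
  have : staircase n = (fun j : Fin n => (j : ℕ)) ∘ Fin.revPerm := by
    ext j
    simp only [staircase, Function.comp_apply, Fin.revPerm_apply, Fin.val_rev]
    omega
  rw [this, alternant_comp_perm]
  rfl

theorem alternant_staircase_mul_alternant_staircase (u v : Fin n → R) :
    alternant u (staircase n) * alternant v (staircase n) =
      (vandermonde u).det * (vandermonde v).det := by
  have hsign : ((Equiv.Perm.sign (Fin.revPerm : Equiv.Perm (Fin n)) : ℤ) : R) ^ 2 = 1 := by
    rw [← Int.cast_pow, ← Units.val_pow_eq_pow_val, Int.units_sq, Units.val_one, Int.cast_one]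
  rw [alternant_staircase, alternant_staircase]
  linear_combination (vandermonde u).det * (vandermonde v).det * hsign

theorem hasSum_alternant_mul_prod_pow (u v : Fin n → ℝ) (h₀ : ∀ i j, 0 ≤ u i * v j)
    (h₁ : ∀ i j, u i * v j < 1) :
    HasSum (fun k : Fin n → ℕ => alternant u k * ∏ j, v j ^ k j) (cauchyMatrix u v).det := by
  simp only [alternant_mul_prod_pow, cauchyMatrix, det_apply', of_apply]
  refine hasSum_sum fun σ _ => HasSum.mul_left _ <| hasSum_pi_prod_of_nonneg
    (fun j k => pow_nonneg (h₀ _ _) k) fun j => hasSum_geometric_of_lt_one (h₀ _ _) (h₁ _ _)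

theorem hasSum_alternant_mul_alternant (u v : Fin n → ℝ) (h₀ : ∀ i j, 0 ≤ u i * v j)
    (h₁ : ∀ i j, u i * v j < 1) :
    HasSum (fun m : {m : Fin n → ℕ // StrictAnti m} => alternant u m.1 * alternant v m.1)
      (cauchyMatrix u v).det := by
  have hsupp : (Function.support fun k : Fin n → ℕ => alternant u k * ∏ j, v j ^ k j) ⊆
      {k | Function.Injective k} := fun k hk => by
    by_contra hk'
    exact hk (by simp [alternant_eq_zero_of_not_injective u hk'])
  have hinj := (hasSum_subtype_iff_of_support_subset hsupp).2
    (hasSum_alternant_mul_prod_pow u v h₀ h₁)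
  refine (strictAntiProdPermEquiv.hasSum_iff.2 hinj).prod_fiberwise fun m => ?_
  rw [← sum_perm_alternant_mul_prod_pow]
  exact hasSum_fintype _

end Alternant

theorem schurVal_eq_alternant_div {n : ℕ} (lam : Fin n → ℕ) (w : Fin n → ℝ) :
    schurVal n lam w = alternant w (lam + staircase n) / alternant w (staircase n) := by
  have hexp (j : Fin n) : lam j + n - 1 - j = (lam + staircase n) j := by
    simp only [Pi.add_apply, staircase]
    omega
  rw [schurVal, alternant, alternant]
  simp only [hexp]
  rfl

theorem cauchy_identity_schur_general (n : ℕ) (u v : Fin n → ℝ)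
    (hu : Function.Injective u) (hv : Function.Injective v)
    (hu1 : ∀ i, 0 < u i ∧ u i < 1) (hv1 : ∀ i, 0 < v i ∧ v i < 1) :
    HasSum (fun lam : {l : Fin n → ℕ // Antitone l} =>
        schurVal n lam.val u * schurVal n lam.val v)
      (∏ i : Fin n, ∏ j : Fin n, (1 - u i * v j)⁻¹) := by
  have h₀ : ∀ i j, 0 ≤ u i * v j := fun i j => mul_nonneg (hu1 i).1.le (hv1 j).1.le
  have h₁ : ∀ i j, u i * v j < 1 := fun i j =>
    mul_lt_one_of_nonneg_of_lt_one_left (hu1 i).1.le (hu1 i).2 (hv1 j).2.le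
  have hV : (vandermonde u).det * (vandermonde v).det ≠ 0 :=
    mul_ne_zero (det_vandermonde_ne_zero_iff.2 hu) (det_vandermonde_ne_zero_iff.2 hv)
  have hsum := ((antitoneEquivStrictAnti n).hasSum_iff.2
    (hasSum_alternant_mul_alternant u v h₀ h₁)).div_const
      ((vandermonde u).det * (vandermonde v).det)
  rw [det_cauchyMatrix u v fun i j => (sub_pos.2 (h₁ i j)).ne',
    mul_div_cancel_right₀ _ hV] at hsum
  refine hsum.congr_fun fun l => ?_
  rw [schurVal_eq_alternant_div, schurVal_eq_alternant_div, div_mul_div_comm,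
    alternant_staircase_mul_alternant_staircase]
  rfl

/-- Cauchy identity: for tuples `u, v` of pairwise distinct reals in `(0,1)`,
the family `(s_λ(u)·s_λ(v))`, indexed by all weakly decreasing `λ : Fin n → ℕ`,
is summable with sum `∏_{i,j} (1 − u_i v_j)^{−1}`. -/
theorem cauchy_identity_schur (n : ℕ) (hn : 1 ≤ n) (u v : Fin n → ℝ)
    (hu : Function.Injective u) (hv : Function.Injective v)
    (hu1 : ∀ i, 0 < u i ∧ u i < 1) (hv1 : ∀ i, 0 < v i ∧ v i < 1) :
    HasSum (fun lam : {l : Fin n → ℕ // Antitone l} =>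
        schurVal n lam.val u * schurVal n lam.val v)
      (∏ i : Fin n, ∏ j : Fin n, (1 - u i * v j)⁻¹) :=
  cauchy_identity_schur_general n u v hu hv hu1 hv1
end
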